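/- Let B be a list of bids sorted descending by bid competitiveness and A a list of asks sorted descending by ask competitiveness (most competitive first). Then the matching M_U = UM(B, A) produced by the uniform-matching procedure is individual-rational and uniform, and for every individual-rational uniform matching M between B and A, Q(M_U) ≥ Q(M). That is, UM outputs an optimal individual-rational-uniform matching. -/

import Mathlib

/-!
`fu` walks down both books, always trading the most competitive remaining bid against the most
competitive remaining ask, at that ask's price. Along its output ask prices therefore rise and bid
prices fall, so the last trade price, itself an ask price, lies between the two limit prices of
every trade: this makes `UM` individually rational.

For optimality, a uniform individually rational matching at price `q` only uses bids with limit at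
least `q` and asks with limit at most `q`. In sorted books these form prefixes in which every bid
can trade with every ask, and the greedy `fu` trades at least the smaller of the two prefix
volumes.
-/

structure Bid where
  id : ℕ
  timestamp : ℕ
  quantity : ℕ
  price : ℕ
deriving DecidableEq

structure Ask where
  id : ℕ
  timestamp : ℕ
  quantity : ℕ
  price : ℕ
deriving DecidableEq

structure Transaction where
  bid : Bid
  ask : Ask
  quantity : ℕ
  price : ℕ
deriving DecidableEq

/-- Total traded quantity of a list of transactions. -/
def Qty (M : List Transaction) : ℕ := (M.map Transaction.quantity).sum

/-- Total traded quantity of bid `b` in `M`. -/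
def QtyBid (b : Bid) (M : List Transaction) : ℕ :=
  ((M.filter (fun m => m.bid == b)).map Transaction.quantity).sum

/-- Total traded quantity of ask `a` in `M`. -/
def QtyAsk (a : Ask) (M : List Transaction) : ℕ :=
  ((M.filter (fun m => m.ask == a)).map Transaction.quantity).sum

/-- Total traded quantity between bid `b` and ask `a` in `M`. -/
def QtyBidAsk (b : Bid) (a : Ask) (M : List Transaction) : ℕ :=
  ((M.filter (fun m => m.bid == b && m.ask == a)).map Transaction.quantity).sum

/-- Sum of quantities of a list of bids. -/
def QB (B : List Bid) : ℕ := (B.map Bid.quantity).sum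

/-- Sum of quantities of a list of asks. -/
def QA (A : List Ask) : ℕ := (A.map Ask.quantity).sum

/-- `M` is a matching between bids `B` and asks `A`. -/
def Matching (B : List Bid) (A : List Ask) (M : List Transaction) : Prop :=
  (∀ m ∈ M, m.ask.price ≤ m.bid.price) ∧
  (∀ m ∈ M, m.bid ∈ B) ∧
  (∀ m ∈ M, m.ask ∈ A) ∧
  (∀ b ∈ B, QtyBid b M ≤ b.quantity) ∧
  (∀ a ∈ A, QtyAsk a M ≤ a.quantity)

/-- Individual rationality. -/
def IsIR (M : List Transaction) : Prop :=
  ∀ m ∈ M, m.ask.price ≤ m.price ∧ m.price ≤ m.bid.price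

/-- Uniformity: all trade prices equal. -/
def IsUniform (M : List Transaction) : Prop :=
  ∀ m1 ∈ M, ∀ m2 ∈ M, m1.price = m2.price

/-- `b1` is more competitive than `b2`. -/
def MoreCompetitiveBid (b1 b2 : Bid) : Prop :=
  b2.price < b1.price ∨ (b1.price = b2.price ∧ b1.timestamp < b2.timestamp)

/-- `a1` is more competitive than `a2`. -/
def MoreCompetitiveAsk (a1 a2 : Ask) : Prop :=
  a1.price < a2.price ∨ (a1.price = a2.price ∧ a1.timestamp < a2.timestamp)

def FairOnBids (B : List Bid) (M : List Transaction) : Prop :=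
  ∀ b1 ∈ B, ∀ b2 ∈ B, MoreCompetitiveBid b1 b2 → 1 ≤ QtyBid b2 M →
    QtyBid b1 M = b1.quantity

def FairOnAsks (A : List Ask) (M : List Transaction) : Prop :=
  ∀ a1 ∈ A, ∀ a2 ∈ A, MoreCompetitiveAsk a1 a2 → 1 ≤ QtyAsk a2 M →
    QtyAsk a1 M = a1.quantity

def IsFair (B : List Bid) (A : List Ask) (M : List Transaction) : Prop :=
  FairOnBids B M ∧ FairOnAsks A M

/-- "at least as competitive as" order on bids (for sorting, most competitive first). -/
def BidGE (b1 b2 : Bid) : Prop := ¬ MoreCompetitiveBid b2 b1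

/-- "at least as competitive as" order on asks (for sorting, most competitive first). -/
def AskGE (a1 a2 : Ask) : Prop := ¬ MoreCompetitiveAsk a2 a1

/-- The uniform-matching recursion `f_u(B, A, t_b, t_a)`. -/
def fu : List Bid → List Ask → ℕ → ℕ → List Transaction
  | [], _, _, _ => []
  | _ :: _, [], _, _ => []
  | b :: B', a :: A', tb, ta =>
    if b.price < a.price then []
    else if a.quantity - ta = b.quantity - tb then
      ⟨b, a, b.quantity - tb, a.price⟩ :: fu B' A' 0 0
    else if b.quantity - tb < a.quantity - ta then
      ⟨b, a, b.quantity - tb, a.price⟩ :: fu B' (a :: A') 0 (ta + (b.quantity - tb))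
    else
      ⟨b, a, a.quantity - ta, a.price⟩ :: fu (b :: B') A' (tb + (a.quantity - ta)) 0
termination_by B A _ _ => B.length + A.length
decreasing_by all_goals (simp; try omega)

/-- Trade price of the last transaction (0 if none). -/
def lastPrice (M : List Transaction) : ℕ := (M.getLast?.map Transaction.price).getD 0

/-- Replace all trade prices in `M` by `p`. -/
def replacePrices (M : List Transaction) (p : ℕ) : List Transaction :=
  M.map (fun m => { m with price := p })

/-- The uniform matching procedure. -/
def UM (B : List Bid) (A : List Ask) : List Transaction :=
  replacePrices (fu B A 0 0) (lastPrice (fu B A 0 0))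

section qtyBy

variable {α : Type*} [DecidableEq α] (f : Transaction → α)

def qtyBy (x : α) (M : List Transaction) : ℕ :=
  ((M.filter (fun m => f m == x)).map Transaction.quantity).sum

theorem QtyBid_eq_qtyBy (b : Bid) (M : List Transaction) :
    QtyBid b M = qtyBy Transaction.bid b M := rfl

theorem QtyAsk_eq_qtyBy (a : Ask) (M : List Transaction) :
    QtyAsk a M = qtyBy Transaction.ask a M := rfl

@[simp] theorem Qty_cons (t : Transaction) (M : List Transaction) :
    Qty (t :: M) = t.quantity + Qty M := by
  simp [Qty]

theorem qtyBy_cons (x : α) (t : Transaction) (M : List Transaction) :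
    qtyBy f x (t :: M) = (if f t = x then t.quantity else 0) + qtyBy f x M := by
  by_cases h : f t = x <;> simp [qtyBy, h]

theorem qtyBy_eq_zero {x : α} {M : List Transaction} (h : ∀ m ∈ M, f m ≠ x) :
    qtyBy f x M = 0 := by
  rw [qtyBy, List.filter_eq_nil_iff.2 fun m hm => by simpa using h m hm]
  rfl

theorem qtyBy_add_Qty_filter_ne (x : α) (M : List Transaction) :
    qtyBy f x M + Qty (M.filter fun m => f m ≠ x) = Qty M := by
  induction M with
  | nil => rfl
  | cons t M ih => by_cases h : f t = x <;> simp [qtyBy_cons, h, ← ih] <;> omega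

theorem qtyBy_filter_le (x : α) (p : Transaction → Bool) (M : List Transaction) :
    qtyBy f x (M.filter p) ≤ qtyBy f x M :=
  (((List.filter_sublist (l := M)).filter _).map _).sum_le_sum fun _ _ => Nat.zero_le _

theorem Qty_le_sum_map_of_forall_mem (cap : α → ℕ) (L : List α) :
    ∀ M : List Transaction, (∀ m ∈ M, f m ∈ L) → (∀ x ∈ L, qtyBy f x M ≤ cap x) →
      Qty M ≤ (L.map cap).sum := by
  induction L with
  | nil =>
    intro M hmem _
    obtain rfl : M = [] := List.eq_nil_iff_forall_not_mem.2 fun m hm => by simpa using hmem m hm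
    rfl
  | cons x L ih =>
    intro M hmem hcap
    have hrest := ih (M.filter fun m => f m ≠ x)
      (fun m hm => by
        obtain ⟨hm, hne⟩ := List.mem_filter.1 hm
        exact (List.mem_cons.1 (hmem m hm)).resolve_left (by simpa using hne))
      (fun y hy => (qtyBy_filter_le f y _ M).trans (hcap y (by simp [hy])))
    have hx := hcap x (by simp)
    rw [← qtyBy_add_Qty_filter_ne f x M, List.map_cons, List.sum_cons]
    omega

end qtyBy

theorem of_mem_fu {B : List Bid} {A : List Ask} {tb ta : ℕ} {m : Transaction}
    (hm : m ∈ fu B A tb ta) :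
    m.bid ∈ B ∧ m.ask ∈ A ∧ m.price = m.ask.price ∧ m.ask.price ≤ m.bid.price := by
  induction B, A, tb, ta using fu.induct with
  | case1 | case2 => simp [fu] at hm
  | case3 b B' a A' tb ta h => simp [fu, h] at hm
  | case4 b B' a A' tb ta h₁ h₂ ih
  | case5 b B' a A' tb ta h₁ h₂ _ ih
  | case6 b B' a A' tb ta h₁ h₂ _ ih =>
    simp only [fu.eq_3, *, ↓reduceIte, List.mem_cons] at hm
    rcases hm with rfl | hm
    · simp only [List.mem_cons, true_or, true_and]
      omega
    · have := ih hm
      simp_all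

theorem QtyBid_fu_le {B : List Bid} {A : List Ask} {tb ta : ℕ} (hB : B.Nodup) {b : Bid}
    (hb : b ∈ B) : QtyBid b (fu B A tb ta) ≤ b.quantity - if B.head? = some b then tb else 0 := by
  induction B, A, tb, ta using fu.induct with
  | case1 | case2 => simp [fu, QtyBid]
  | case3 b B' a A' tb ta h => simp [fu, h, QtyBid]
  | case4 b' B' a A' tb ta h₁ h₂ ih
  | case5 b' B' a A' tb ta h₁ h₂ _ ih =>
    simp only [fu.eq_3, *, ↓reduceIte, QtyBid_eq_qtyBy, qtyBy_cons]
    obtain ⟨hb'B', hB'⟩ := List.nodup_cons.1 hB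
    rcases List.mem_cons.1 hb with rfl | hb
    · rw [qtyBy_eq_zero (x := b) Transaction.bid fun m hm h => hb'B' (h ▸ (of_mem_fu hm).1)]
      simp
    · have hne : b' ≠ b := fun h => hb'B' (h ▸ hb)
      simpa [hne, QtyBid_eq_qtyBy] using ih hB' hb
  | case6 b' B' a A' tb ta h₁ h₂ h₃ ih =>
    simp only [fu.eq_3, *, ↓reduceIte, QtyBid_eq_qtyBy, qtyBy_cons]
    rcases List.mem_cons.1 hb with rfl | hb
    · have := ih hB List.mem_cons_self
      simp only [QtyBid_eq_qtyBy, List.head?_cons, ↓reduceIte] at this ⊢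
      omega
    · have hne : b' ≠ b := fun h => (List.nodup_cons.1 hB).1 (h ▸ hb)
      simpa [hne, QtyBid_eq_qtyBy] using ih hB (List.mem_cons_of_mem _ hb)

theorem QtyAsk_fu_le {B : List Bid} {A : List Ask} {tb ta : ℕ} (hA : A.Nodup) {a : Ask}
    (ha : a ∈ A) : QtyAsk a (fu B A tb ta) ≤ a.quantity - if A.head? = some a then ta else 0 := by
  induction B, A, tb, ta using fu.induct with
  | case1 | case2 => simp [fu, QtyAsk]
  | case3 b B' a A' tb ta h => simp [fu, h, QtyAsk]
  | case4 b B' a' A' tb ta h₁ h₂ ih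
  | case6 b B' a' A' tb ta h₁ h₂ _ ih =>
    simp only [fu.eq_3, *, ↓reduceIte, QtyAsk_eq_qtyBy, qtyBy_cons]
    obtain ⟨ha'A', hA'⟩ := List.nodup_cons.1 hA
    rcases List.mem_cons.1 ha with rfl | ha
    · rw [qtyBy_eq_zero (x := a) Transaction.ask fun m hm h => ha'A' (h ▸ (of_mem_fu hm).2.1)]
      simp [h₂]
    · have hne : a' ≠ a := fun h => ha'A' (h ▸ ha)
      simpa [hne, QtyAsk_eq_qtyBy] using ih hA' ha
  | case5 b B' a' A' tb ta h₁ h₂ h₃ ih =>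
    simp only [fu.eq_3, *, ↓reduceIte, QtyAsk_eq_qtyBy, qtyBy_cons]
    rcases List.mem_cons.1 ha with rfl | ha
    · have := ih hA List.mem_cons_self
      simp only [QtyAsk_eq_qtyBy, List.head?_cons, ↓reduceIte] at this ⊢
      omega
    · have hne : a' ≠ a := fun h => (List.nodup_cons.1 hA).1 (h ▸ ha)
      simpa [hne, QtyAsk_eq_qtyBy] using ih hA (List.mem_cons_of_mem _ ha)

theorem BidGE.price_le {b₁ b₂ : Bid} (h : BidGE b₁ b₂) : b₂.price ≤ b₁.price := by
  unfold BidGE MoreCompetitiveBid at h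
  omega

theorem AskGE.price_le {a₁ a₂ : Ask} (h : AskGE a₁ a₂) : a₁.price ≤ a₂.price := by
  unfold AskGE MoreCompetitiveAsk at h
  omega

theorem Bid.price_le_of_mem_of_pairwise {b x : Bid} {B : List Bid}
    (hB : (b :: B).Pairwise BidGE) (hx : x ∈ b :: B) : x.price ≤ b.price := by
  rcases List.mem_cons.1 hx with rfl | hx
  · rfl
  · exact (List.rel_of_pairwise_cons hB hx).price_le

theorem Ask.price_le_of_mem_of_pairwise {a x : Ask} {A : List Ask}
    (hA : (a :: A).Pairwise AskGE) (hx : x ∈ a :: A) : a.price ≤ x.price := by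
  rcases List.mem_cons.1 hx with rfl | hx
  · rfl
  · exact (List.rel_of_pairwise_cons hA hx).price_le

theorem pairwise_fu {B : List Bid} {A : List Ask} {tb ta : ℕ} (hB : B.Pairwise BidGE)
    (hA : A.Pairwise AskGE) : (fu B A tb ta).Pairwise
      fun m m' => m.ask.price ≤ m'.ask.price ∧ m'.bid.price ≤ m.bid.price := by
  induction B, A, tb, ta using fu.induct with
  | case1 | case2 => simp [fu]
  | case3 b B' a A' tb ta h => simp [fu, h]
  | case4 b B' a A' tb ta h₁ h₂ ih
  | case5 b B' a A' tb ta h₁ h₂ _ ih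
  | case6 b B' a A' tb ta h₁ h₂ _ ih =>
    simp only [fu.eq_3, *, ↓reduceIte]
    refine List.pairwise_cons.2 ⟨fun m hm => ?_, ih (by simp_all) (by simp_all)⟩
    obtain ⟨hmb, hma, -⟩ := of_mem_fu hm
    exact ⟨Ask.price_le_of_mem_of_pairwise hA (by simp_all),
      Bid.price_le_of_mem_of_pairwise hB (by simp_all)⟩

theorem lastPrice_eq_price_getLast {M : List Transaction} (h : M ≠ []) :
    lastPrice M = (M.getLast h).price := by
  simp [lastPrice, List.getLast?_eq_some_getLast h]

theorem lastPrice_fu_mem_Icc {B : List Bid} {A : List Ask} {tb ta : ℕ}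
    (hB : B.Pairwise BidGE) (hA : A.Pairwise AskGE) {m : Transaction} (hm : m ∈ fu B A tb ta) :
    lastPrice (fu B A tb ta) ∈ Set.Icc m.ask.price m.bid.price := by
  have hne : fu B A tb ta ≠ [] := List.ne_nil_of_mem hm
  obtain ⟨-, -, hlast_price, hlast_le⟩ := of_mem_fu (List.getLast_mem hne)
  obtain ⟨hask, hbid⟩ :=
    (pairwise_fu (tb := tb) (ta := ta) hB hA).rel_getLast_of_rel_getLast_getLast hm ⟨le_rfl, le_rfl⟩
  rw [lastPrice_eq_price_getLast hne, Set.mem_Icc]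
  omega

@[simp] theorem QB_cons (b : Bid) (B : List Bid) : QB (b :: B) = b.quantity + QB B := by
  simp [QB]

@[simp] theorem QA_cons (a : Ask) (A : List Ask) : QA (a :: A) = a.quantity + QA A := by
  simp [QA]

theorem min_le_Qty_fu {B : List Bid} {A : List Ask} {tb ta : ℕ} {B₁ : List Bid} {A₁ : List Ask}
    (hB₁ : B₁ <+: B) (hA₁ : A₁ <+: A) (hc : ∀ b ∈ B₁, ∀ a ∈ A₁, a.price ≤ b.price) :
    min (QB B₁ - tb) (QA A₁ - ta) ≤ Qty (fu B A tb ta) := by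
  induction B, A, tb, ta using fu.induct generalizing B₁ A₁ with
  | case1 => simp [List.prefix_nil.1 hB₁, QB]
  | case2 => simp [List.prefix_nil.1 hA₁, QA]
  | case3 b B' a A' tb ta h =>
    obtain rfl | ⟨B₁, rfl, -⟩ := List.prefix_cons_iff.1 hB₁; · simp [QB]
    obtain rfl | ⟨A₁, rfl, -⟩ := List.prefix_cons_iff.1 hA₁; · simp [QA]
    exact absurd (hc b List.mem_cons_self a List.mem_cons_self) (by omega)
  | case4 b B' a A' tb ta h₁ h₂ ih =>
    obtain rfl | ⟨B₁, rfl, hB'⟩ := List.prefix_cons_iff.1 hB₁; · simp [QB]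
    obtain rfl | ⟨A₁, rfl, hA'⟩ := List.prefix_cons_iff.1 hA₁; · simp [QA]
    have := ih hB' hA' fun b hb a ha => hc b (.tail _ hb) a (.tail _ ha)
    simp only [fu.eq_3, h₁, h₂, ↓reduceIte, QB_cons, QA_cons, Qty_cons] at this ⊢
    omega
  | case5 b B' a A' tb ta h₁ h₂ h₃ ih =>
    obtain rfl | ⟨B₁, rfl, hB'⟩ := List.prefix_cons_iff.1 hB₁; · simp [QB]
    obtain rfl | ⟨A₁, rfl, -⟩ := List.prefix_cons_iff.1 hA₁; · simp [QA]
    have := ih hB' hA₁ fun b hb a ha => hc b (.tail _ hb) a ha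
    simp only [fu.eq_3, h₁, h₂, h₃, ↓reduceIte, QB_cons, QA_cons, Qty_cons] at this ⊢
    omega
  | case6 b B' a A' tb ta h₁ h₂ h₃ ih =>
    obtain rfl | ⟨B₁, rfl, -⟩ := List.prefix_cons_iff.1 hB₁; · simp [QB]
    obtain rfl | ⟨A₁, rfl, hA'⟩ := List.prefix_cons_iff.1 hA₁; · simp [QA]
    have := ih hB₁ hA' fun b hb a ha => hc b hb a (.tail _ ha)
    simp only [fu.eq_3, h₁, h₂, h₃, ↓reduceIte, QB_cons, QA_cons, Qty_cons] at this ⊢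
    omega

theorem List.mem_takeWhile_of_pairwise {α : Type*} {R : α → α → Prop} {p : α → Bool}
    {l : List α} (hl : l.Pairwise R) (hp : ∀ x y, R x y → p y → p x) {x : α} (hx : x ∈ l)
    (hpx : p x) : x ∈ l.takeWhile p := by
  induction l with
  | nil => simp at hx
  | cons y l ih =>
    obtain ⟨hyl, hl⟩ := List.pairwise_cons.1 hl
    by_cases hpy : p y
    · rw [List.takeWhile_cons_of_pos hpy]
      rcases List.mem_cons.1 hx with rfl | hx
      · exact List.mem_cons_self
      · exact .tail _ (ih hl hx)
    · rcases List.mem_cons.1 hx with rfl | hx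
      · exact absurd hpx hpy
      · exact absurd (hp y x (hyl x hx) hpx) hpy

theorem Qty_le_QB_takeWhile {B : List Bid} (hsB : B.Pairwise BidGE) {M : List Transaction}
    (hmem : ∀ m ∈ M, m.bid ∈ B) (hcap : ∀ b ∈ B, QtyBid b M ≤ b.quantity) {q : ℕ}
    (hq : ∀ m ∈ M, q ≤ m.bid.price) : Qty M ≤ QB (B.takeWhile fun b => q ≤ b.price) := by
  refine Qty_le_sum_map_of_forall_mem Transaction.bid Bid.quantity _ M
    (fun m hm => List.mem_takeWhile_of_pairwise hsB ?_ (hmem m hm) (by simpa using hq m hm))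
    (fun b hb => hcap b ((List.takeWhile_sublist _).subset hb))
  intro x y hxy hy
  simp only [decide_eq_true_eq] at hy ⊢
  exact hy.trans hxy.price_le

theorem Qty_le_QA_takeWhile {A : List Ask} (hsA : A.Pairwise AskGE) {M : List Transaction}
    (hmem : ∀ m ∈ M, m.ask ∈ A) (hcap : ∀ a ∈ A, QtyAsk a M ≤ a.quantity) {q : ℕ}
    (hq : ∀ m ∈ M, m.ask.price ≤ q) : Qty M ≤ QA (A.takeWhile fun a => a.price ≤ q) := by
  refine Qty_le_sum_map_of_forall_mem Transaction.ask Ask.quantity _ M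
    (fun m hm => List.mem_takeWhile_of_pairwise hsA ?_ (hmem m hm) (by simpa using hq m hm))
    (fun a ha => hcap a ((List.takeWhile_sublist _).subset ha))
  intro x y hxy hy
  simp only [decide_eq_true_eq] at hy ⊢
  exact hxy.price_le.trans hy

theorem mem_replacePrices {M : List Transaction} {p : ℕ} {m : Transaction} :
    m ∈ replacePrices M p ↔ ∃ m₀ ∈ M, { m₀ with price := p } = m :=
  List.mem_map

@[simp] theorem Qty_replacePrices (M : List Transaction) (p : ℕ) :
    Qty (replacePrices M p) = Qty M := by
  simp [Qty, replacePrices, Function.comp_def]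

@[simp] theorem QtyBid_replacePrices (b : Bid) (M : List Transaction) (p : ℕ) :
    QtyBid b (replacePrices M p) = QtyBid b M := by
  simp [QtyBid, replacePrices, List.filter_map, Function.comp_def]

@[simp] theorem QtyAsk_replacePrices (a : Ask) (M : List Transaction) (p : ℕ) :
    QtyAsk a (replacePrices M p) = QtyAsk a M := by
  simp [QtyAsk, replacePrices, List.filter_map, Function.comp_def]

theorem matching_UM {B : List Bid} {A : List Ask} (hB : B.Nodup) (hA : A.Nodup) :
    Matching B A (UM B A) := by
  refine ⟨?_, ?_, ?_, fun b hb => ?_, fun a ha => ?_⟩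
  iterate 3
    · rintro _ hm
      obtain ⟨m, hfu, rfl⟩ := mem_replacePrices.1 hm
      have := of_mem_fu hfu
      simp [this]
  · simpa [UM] using (QtyBid_fu_le hB hb).trans (Nat.sub_le _ _)
  · simpa [UM] using (QtyAsk_fu_le hA ha).trans (Nat.sub_le _ _)

theorem isIR_UM {B : List Bid} {A : List Ask} (hB : B.Pairwise BidGE) (hA : A.Pairwise AskGE) :
    IsIR (UM B A) := by
  rintro _ hm
  obtain ⟨m, hfu, rfl⟩ := mem_replacePrices.1 hm
  exact lastPrice_fu_mem_Icc (m := m) hB hA hfu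

theorem isUniform_UM (B : List Bid) (A : List Ask) : IsUniform (UM B A) := by
  rintro _ hm₁ _ hm₂
  obtain ⟨_, -, rfl⟩ := mem_replacePrices.1 hm₁
  obtain ⟨_, -, rfl⟩ := mem_replacePrices.1 hm₂
  rfl

theorem Qty_le_Qty_UM {B : List Bid} {A : List Ask} (hsB : B.Pairwise BidGE)
    (hsA : A.Pairwise AskGE) {M : List Transaction} (hM : Matching B A M) (hIR : IsIR M)
    (hU : IsUniform M) : Qty M ≤ Qty (UM B A) := by
  obtain ⟨-, hbid, hask, hcapB, hcapA⟩ := hM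
  rcases M with _ | ⟨m₀, M⟩
  · exact Nat.zero_le _
  have hq (m) (hm : m ∈ m₀ :: M) : m.ask.price ≤ m₀.price ∧ m₀.price ≤ m.bid.price :=
    hU m hm m₀ List.mem_cons_self ▸ hIR m hm
  have hQB := Qty_le_QB_takeWhile hsB hbid hcapB fun m hm => (hq m hm).2
  have hQA := Qty_le_QA_takeWhile hsA hask hcapA fun m hm => (hq m hm).1
  have hfu := min_le_Qty_fu (tb := 0) (ta := 0) (List.takeWhile_prefix _) (List.takeWhile_prefix _)
    fun b (hb : b ∈ B.takeWhile fun b => m₀.price ≤ b.price)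
      a (ha : a ∈ A.takeWhile fun a => a.price ≤ m₀.price) => by
      have hb : m₀.price ≤ b.price := by simpa using List.mem_takeWhile_imp hb
      have ha : a.price ≤ m₀.price := by simpa using List.mem_takeWhile_imp ha
      omega
  rw [UM, Qty_replacePrices]
  omega

theorem statement_15 (B : List Bid) (A : List Ask)
    (hB : (B.map Bid.id).Nodup) (hA : (A.map Ask.id).Nodup)
    (hsB : List.Pairwise BidGE B) (hsA : List.Pairwise AskGE A) :
    Matching B A (UM B A) ∧ IsIR (UM B A) ∧ IsUniform (UM B A) ∧
    ∀ M, Matching B A M → IsIR M → IsUniform M → Qty M ≤ Qty (UM B A) :=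
  ⟨matching_UM hB.of_map hA.of_map, isIR_UM hsB hsA, isUniform_UM B A,
    fun _ hM hIR hU => Qty_le_Qty_UM hsB hsA hM hIR hU⟩
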